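/- Let a,b,c ≥ 2, p̄ = lcm(a,b,c), L = L(a,b,c), ω = c⃗ − (x₁+x₂+x₃) the dualizing element, and δ: L → ℤ the group homomorphism with δ(x₁) = p̄/a, δ(x₂) = p̄/b, δ(x₃) = p̄/c (the degree map). Then p̄·ω = δ(ω)·c⃗ in L, and moreover p̄ is the smallest positive integer n such that n·ω ∈ ℤ·c⃗. -/
import Mathlib


/-- The subgroup of relations defining L(a,b,c). -/
def LRel (a b c : ℕ) : AddSubgroup (ℤ × ℤ × ℤ) :=
  AddSubgroup.closure {((a : ℤ), -(b : ℤ), 0), ((0 : ℤ), (b : ℤ), -(c : ℤ))}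

/-- The rank-one abelian group L(a,b,c) on generators x₁,x₂,x₃ with a·x₁ = b·x₂ = c·x₃. -/
abbrev LGrp (a b c : ℕ) := (ℤ × ℤ × ℤ) ⧸ LRel a b c

def Lx1 (a b c : ℕ) : LGrp a b c := QuotientAddGroup.mk (1, 0, 0)
def Lx2 (a b c : ℕ) : LGrp a b c := QuotientAddGroup.mk (0, 1, 0)
def Lx3 (a b c : ℕ) : LGrp a b c := QuotientAddGroup.mk (0, 0, 1)

/-- Canonical element c⃗ = a·x₁. -/
def Lcan (a b c : ℕ) : LGrp a b c := (a : ℤ) • Lx1 a b c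

/-- Dualizing element ω = c⃗ − (x₁+x₂+x₃). -/
def Lomega (a b c : ℕ) : LGrp a b c :=
  Lcan a b c - (Lx1 a b c + Lx2 a b c + Lx3 a b c)

/-- Dominant element δ⃗ = c⃗ + 2ω. -/
def Ldelta (a b c : ℕ) : LGrp a b c := Lcan a b c + (2 : ℤ) • Lomega a b c

/-- The partial order on L given by the positive cone ℕx₁+ℕx₂+ℕx₃ : u ≤ v iff v−u ∈ ℕx₁+ℕx₂+ℕx₃. -/
def Lle (a b c : ℕ) (u v : LGrp a b c) : Prop :=
  ∃ n1 n2 n3 : ℕ,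
    v - u = (n1 : ℤ) • Lx1 a b c + (n2 : ℤ) • Lx2 a b c + (n3 : ℤ) • Lx3 a b c

lemma mem_LRel_iff (a b c : ℕ) (v : ℤ × ℤ × ℤ) :
    v ∈ LRel a b c ↔ ∃ s t : ℤ,
      s • (((a : ℤ), -(b : ℤ), 0) : ℤ × ℤ × ℤ) +
        t • (((0 : ℤ), (b : ℤ), -(c : ℤ)) : ℤ × ℤ × ℤ) = v :=
  AddSubgroup.mem_closure_pair

lemma Lomega_eq (a b c : ℕ) :
    Lomega a b c = QuotientAddGroup.mk ((a : ℤ) - 1, -1, -1) := by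
  unfold Lomega Lcan Lx1 Lx2 Lx3
  rw [← QuotientAddGroup.mk_zsmul, ← QuotientAddGroup.mk_add, ← QuotientAddGroup.mk_add,
    ← QuotientAddGroup.mk_sub]
  congr 1
  simp [Prod.ext_iff]

lemma Lcan_eq (a b c : ℕ) :
    Lcan a b c = QuotientAddGroup.mk ((a : ℤ), 0, 0) := by
  unfold Lcan Lx1
  rw [← QuotientAddGroup.mk_zsmul]
  congr 1
  simp [Prod.ext_iff]

lemma key_iff (a b c : ℕ) (n m : ℤ) :
    n • Lomega a b c = m • Lcan a b c ↔
      ∃ s t : ℤ,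
        s • (((a : ℤ), -(b : ℤ), 0) : ℤ × ℤ × ℤ) +
          t • (((0 : ℤ), (b : ℤ), -(c : ℤ)) : ℤ × ℤ × ℤ)
          = (m * a - n * ((a : ℤ) - 1), n, n) := by
  rw [Lomega_eq, Lcan_eq, ← QuotientAddGroup.mk_zsmul, ← QuotientAddGroup.mk_zsmul,
    QuotientAddGroup.eq, mem_LRel_iff]
  constructor
  · rintro ⟨s, t, h⟩
    refine ⟨s, t, ?_⟩
    rw [h]
    simp only [Prod.ext_iff, Prod.fst_add, Prod.snd_add, Prod.smul_mk, smul_eq_mul,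
      Prod.fst_neg, Prod.snd_neg, Prod.neg_mk, Prod.mk_add_mk]
    and_intros <;> ring
  · rintro ⟨s, t, h⟩
    refine ⟨s, t, ?_⟩
    rw [h]
    simp only [Prod.ext_iff, Prod.fst_add, Prod.snd_add, Prod.smul_mk, smul_eq_mul,
      Prod.fst_neg, Prod.snd_neg, Prod.neg_mk, Prod.mk_add_mk]
    and_intros <;> ring

/-- With p̄ = lcm(a,b,c) and δ the degree map (δ(xᵢ) = p̄/pᵢ), one has
    p̄·ω = δ(ω)·c⃗, and p̄ is the smallest positive n with n·ω ∈ ℤ·c⃗. -/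
theorem lcm_smul_omega (a b c : ℕ) (ha : 2 ≤ a) (hb : 2 ≤ b) (hc : 2 ≤ c)
    (δ : LGrp a b c →+ ℤ)
    (hδ1 : δ (Lx1 a b c) = (Nat.lcm (Nat.lcm a b) c : ℤ) / a)
    (hδ2 : δ (Lx2 a b c) = (Nat.lcm (Nat.lcm a b) c : ℤ) / b)
    (hδ3 : δ (Lx3 a b c) = (Nat.lcm (Nat.lcm a b) c : ℤ) / c) :
    ((Nat.lcm (Nat.lcm a b) c : ℤ)) • Lomega a b c = δ (Lomega a b c) • Lcan a b c ∧
    (∀ n : ℕ, 0 < n → (∃ m : ℤ, (n : ℤ) • Lomega a b c = m • Lcan a b c) →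
      Nat.lcm (Nat.lcm a b) c ≤ n) := by
  set P : ℤ := (Nat.lcm (Nat.lcm a b) c : ℤ) with hP
  have haP : (a : ℤ) ∣ P :=
    Int.natCast_dvd_natCast.2 (dvd_trans (Nat.dvd_lcm_left a b) (Nat.dvd_lcm_left _ c))
  have hbP : (b : ℤ) ∣ P :=
    Int.natCast_dvd_natCast.2 (dvd_trans (Nat.dvd_lcm_right a b) (Nat.dvd_lcm_left _ c))
  have hcP : (c : ℤ) ∣ P := Int.natCast_dvd_natCast.2 (Nat.dvd_lcm_right _ c)
  have hA : (P / a) * a = P := Int.ediv_mul_cancel haP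
  have hB : (P / b) * b = P := Int.ediv_mul_cancel hbP
  have hC : (P / c) * c = P := Int.ediv_mul_cancel hcP
  have hδω : δ (Lomega a b c) = P - P / a - P / b - P / c := by
    unfold Lomega Lcan
    simp only [map_sub, map_add, map_zsmul, hδ1, hδ2, hδ3, smul_eq_mul]
    rw [mul_comm]
    rw [hA]
    ring
  constructor
  · rw [key_iff, hδω]
    refine ⟨-(P / b + P / c), -(P / c), ?_⟩
    simp [Prod.ext_iff]
    refine ⟨?_, ?_, ?_⟩
    · nlinarith [hA, hB, hC]
    · linarith [hB]
    · linarith [hC]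
  · rintro n hn ⟨m, hm⟩
    rw [key_iff] at hm
    obtain ⟨s, t, h⟩ := hm
    simp [Prod.ext_iff] at h
    obtain ⟨h1, h2, h3⟩ := h
    have han : (a : ℤ) ∣ (n : ℤ) := by
      have : (a : ℤ) ∣ (n : ℤ) * ((a : ℤ) - 1) := ⟨m - s, by linarith [h1]⟩
      have hcop : IsCoprime (a : ℤ) ((a : ℤ) - 1) := by
        exact ⟨1, -1, by ring⟩
      exact (hcop.dvd_of_dvd_mul_right this)
    have hbn : (b : ℤ) ∣ (n : ℤ) := ⟨t - s, by linarith [h2]⟩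
    have hcn : (c : ℤ) ∣ (n : ℤ) := ⟨-t, by linarith [h3]⟩
    have : Nat.lcm (Nat.lcm a b) c ∣ n := by
      refine Nat.lcm_dvd (Nat.lcm_dvd ?_ ?_) ?_
      · exact_mod_cast han
      · exact_mod_cast hbn
      · exact_mod_cast hcn
    exact Nat.le_of_dvd hn this
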